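/- arXiv:2502.18349 — 4 statements merged into one kernel-verified Lean document; each statement's English description precedes it below -/
import Mathlib

section
/- Let ε ∈ (0,1) and let s : ℂ → ℂ be continuous at 1 with s(1) = ε + ε⁻¹ and s(z)² = z³ + (ε² + ε⁻²)z² + z for all z in a neighborhood of 1. Then (z−1)²·r_{ε,1}(z; s(z)) tends to 4(ε + ε⁻¹)² as z → 1 with z ≠ 1, and (z−1)⁻²·r_{ε,2}(z; s(z)) tends to 1/(4(ε + ε⁻¹)²) as z → 1 with z ≠ 1. In particular r_{ε,1} has a pole of order exactly 2 at z = 1 and r_{ε,2} has a zero of order exactly 2 at z = 1. -/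
open Complex Filter

/-- `r_{ε,1}(z;s) = ((z+1)² + 2z(ε² + ε⁻²) + 2(ε + ε⁻¹)s)/(z−1)²`. -/
noncomputable def r1 (ε : ℝ) (z s : ℂ) : ℂ :=
  ((z + 1)^2 + 2 * z * ((ε : ℂ)^2 + ((ε : ℂ)^2)⁻¹) + 2 * ((ε : ℂ) + (ε : ℂ)⁻¹) * s) / (z - 1)^2

/-- `r_{ε,2}(z;s) = ((z+1)² + 2z(ε² + ε⁻²) − 2(ε + ε⁻¹)s)/(z−1)²`. -/
noncomputable def r2 (ε : ℝ) (z s : ℂ) : ℂ :=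
  ((z + 1)^2 + 2 * z * ((ε : ℂ)^2 + ((ε : ℂ)^2)⁻¹) - 2 * ((ε : ℂ) + (ε : ℂ)⁻¹) * s) / (z - 1)^2

lemma key_identity (e u z s : ℂ) (heu : e * u = 1)
    (hs : s ^ 2 = z^3 + (e^2 + u^2) * z^2 + z) :
    ((z + 1)^2 + 2 * z * (e^2 + u^2) + 2 * (e + u) * s) *
      ((z + 1)^2 + 2 * z * (e^2 + u^2) - 2 * (e + u) * s) = (z - 1)^4 := by
  linear_combination (-(4:ℂ) * (e + u)^2) * hs +
    (-(8:ℂ) * z * (z^2 + (e^2 + u^2) * z + 1)) * heu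

/-- Let `ε ∈ (0,1)` and let `s : ℂ → ℂ` be continuous at `1` with `s(1) = ε + ε⁻¹` and
`s(z)² = z³ + (ε² + ε⁻²)z² + z` near `1`.  Then `(z−1)²·r_{ε,1}(z; s(z)) → 4(ε + ε⁻¹)²` and
`(z−1)⁻²·r_{ε,2}(z; s(z)) → 1/(4(ε + ε⁻¹)²)` as `z → 1`, `z ≠ 1`; i.e. `r_{ε,1}` has a pole of
order exactly `2` and `r_{ε,2}` a zero of order exactly `2` at `z = 1`. -/
theorem stmt2 (ε : ℝ) (hε : ε ∈ Set.Ioo (0 : ℝ) 1) (s : ℂ → ℂ)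
    (hcont : ContinuousAt s 1) (hs1 : s 1 = (ε : ℂ) + (ε : ℂ)⁻¹)
    (hs : ∀ᶠ z in nhds (1 : ℂ), s z ^ 2 = z^3 + ((ε : ℂ)^2 + ((ε : ℂ)^2)⁻¹) * z^2 + z) :
    Tendsto (fun z : ℂ => (z - 1)^2 * r1 ε z (s z)) (nhdsWithin 1 {(1 : ℂ)}ᶜ)
      (nhds (4 * ((ε : ℂ) + (ε : ℂ)⁻¹)^2)) ∧
    Tendsto (fun z : ℂ => ((z - 1)^2)⁻¹ * r2 ε z (s z)) (nhdsWithin 1 {(1 : ℂ)}ᶜ)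
      (nhds (1 / (4 * ((ε : ℂ) + (ε : ℂ)⁻¹)^2))) := by
  obtain ⟨hε0, hε1⟩ := hε
  have hεC : (ε : ℂ) ≠ 0 := by exact_mod_cast (ne_of_gt hε0)
  have hεinv : (ε : ℂ) * (ε : ℂ)⁻¹ = 1 := mul_inv_cancel₀ hεC
  have hip : ((ε : ℂ)^2)⁻¹ = ((ε : ℂ)⁻¹)^2 := (inv_pow _ 2).symm
  set A : ℂ := (ε : ℂ)^2 + ((ε : ℂ)^2)⁻¹ with hA
  set B : ℂ := (ε : ℂ) + (ε : ℂ)⁻¹ with hB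
  have hBne : B ≠ 0 := by
    intro h
    have h1 : (ε : ℂ)^2 = -1 := by
      have := congrArg (fun w => w * (ε : ℂ)) h
      simp only [hB, add_mul, zero_mul] at this
      rw [inv_mul_cancel₀ hεC] at this
      linear_combination this
    have h2 : ((ε^2 : ℝ) : ℂ) = ((-1 : ℝ) : ℂ) := by push_cast; linear_combination h1
    have h3 : (ε^2 : ℝ) = -1 := by exact_mod_cast h2
    nlinarith [sq_nonneg ε]
  set N1 : ℂ → ℂ := fun z => (z + 1)^2 + 2 * z * A + 2 * B * s z with hN1
  have hN1cont : ContinuousAt N1 1 := by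
    apply ContinuousAt.add
    · fun_prop
    · exact continuousAt_const.mul hcont
  have hN1val : N1 1 = 4 * B ^ 2 := by
    simp only [hN1, hs1, hA, hB]
    field_simp
    ring
  have hBsq : (4 : ℂ) * B ^ 2 ≠ 0 := by
    exact mul_ne_zero (by norm_num) (pow_ne_zero 2 hBne)
  have hN1ne : ∀ᶠ z in nhds (1 : ℂ), N1 z ≠ 0 := by
    apply hN1cont.eventually_ne
    rw [hN1val]; exact hBsq
  constructor
  · have heq : ∀ᶠ z in nhdsWithin 1 {(1 : ℂ)}ᶜ,
        (z - 1)^2 * r1 ε z (s z) = N1 z := by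
      filter_upwards [self_mem_nhdsWithin] with z hz
      have hz1 : (z - 1) ≠ 0 := sub_ne_zero.2 hz
      simp only [r1, hN1, hA, hB]
      field_simp
    refine Tendsto.congr' (Filter.EventuallyEq.symm heq) ?_
    have := hN1cont.tendsto
    rw [hN1val] at this
    exact this.mono_left nhdsWithin_le_nhds
  · have heq : ∀ᶠ z in nhdsWithin 1 {(1 : ℂ)}ᶜ,
        ((z - 1)^2)⁻¹ * r2 ε z (s z) = (N1 z)⁻¹ := by
      filter_upwards [self_mem_nhdsWithin, nhdsWithin_le_nhds hs,
        nhdsWithin_le_nhds hN1ne] with z hz hsz hne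
      have hz1 : (z - 1) ≠ 0 := sub_ne_zero.2 hz
      have key : N1 z * ((z + 1)^2 + 2 * z * A - 2 * B * s z) = (z - 1)^4 := by
        simp only [hN1, hA, hB, hip]
        rw [hA, hip] at hsz
        exact key_identity _ _ _ _ hεinv hsz
      have h2 : (z + 1)^2 + 2 * z * A - 2 * B * s z = (z - 1)^4 / N1 z := by
        rw [eq_div_iff hne]
        linear_combination key
      simp only [r2, ← hA, ← hB]
      rw [h2]
      field_simp
    refine Tendsto.congr' (Filter.EventuallyEq.symm heq) ?_
    have h1 : Tendsto (fun z => (N1 z)⁻¹) (nhds 1) (nhds ((N1 1)⁻¹)) :=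
      (hN1cont.inv₀ (by rw [hN1val]; exact hBsq)).tendsto
    rw [hN1val] at h1
    rw [one_div]
    exact h1.mono_left nhdsWithin_le_nhds
end

section
/- Let ε ∈ (0,1), let z ∈ ℂ with z ≠ 0 and z ≠ 1, let t ∈ ℂ with t ≠ 0 and t² = z(z+ε²)(1+ε²z), and set s = t/ε (so that s² = z³ + (ε² + ε⁻²)z² + z). Then F_{ε,1}(z;t) + F_{ε,2}(z;t) = I, F_{ε,1}(z;t)² = F_{ε,1}(z;t), F_{ε,2}(z;t)² = F_{ε,2}(z;t), F_{ε,1}(z;t)·F_{ε,2}(z;t) = 0, F_{ε,2}(z;t)·F_{ε,1}(z;t) = 0, and Φ_ε(z) = r_{ε,2}(z;s)·F_{ε,1}(z;t) + r_{ε,1}(z;s)·F_{ε,2}(z;t). In particular r_{ε,1}(z;s) and r_{ε,2}(z;s) are the eigenvalues of Φ_ε(z) and F_{ε,1}, F_{ε,2} are its spectral projections. -/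
open Matrix Complex

/-- `φ_{ε,1}(z) = [[1, ε²z⁻¹],[ε⁻², 1]]`. -/
noncomputable def phi1 (ε : ℝ) (z : ℂ) : Matrix (Fin 2) (Fin 2) ℂ :=
  !![1, (ε : ℂ)^2 * z⁻¹; ((ε : ℂ)^2)⁻¹, 1]

/-- `φ_{ε,2}(z) = (1 − z⁻¹)⁻¹ [[1, ε²z⁻¹],[ε⁻², 1]]`. -/
noncomputable def phi2 (ε : ℝ) (z : ℂ) : Matrix (Fin 2) (Fin 2) ℂ :=
  (1 - z⁻¹)⁻¹ • !![1, (ε : ℂ)^2 * z⁻¹; ((ε : ℂ)^2)⁻¹, 1]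

/-- `φ₃(z) = [[1, z⁻¹],[1, 1]]`. -/
noncomputable def phi3 (z : ℂ) : Matrix (Fin 2) (Fin 2) ℂ :=
  !![1, z⁻¹; 1, 1]

/-- `φ₄(z) = (1 − z⁻¹)⁻¹ [[1, z⁻¹],[1, 1]]`. -/
noncomputable def phi4 (z : ℂ) : Matrix (Fin 2) (Fin 2) ℂ :=
  (1 - z⁻¹)⁻¹ • !![1, z⁻¹; 1, 1]

/-- `Φ_ε(z) = φ_{ε,1}(z)·φ_{ε,2}(z)·φ₃(z)·φ₄(z)`. -/
noncomputable def Phi (ε : ℝ) (z : ℂ) : Matrix (Fin 2) (Fin 2) ℂ :=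
  phi1 ε z * phi2 ε z * phi3 z * phi4 z

/-- `F_{ε,1}(z;t)`. -/
noncomputable def F1 (ε : ℝ) (z t : ℂ) : Matrix (Fin 2) (Fin 2) ℂ :=
  !![1/2 - z * ((ε : ℂ)^2 - 1) / (2 * t), -((ε : ℂ)^2 * (z + 1)) / (2 * t);
     -(z * (z + 1)) / (2 * t), 1/2 + z * ((ε : ℂ)^2 - 1) / (2 * t)]

/-- `F_{ε,2}(z;t)`. -/
noncomputable def F2 (ε : ℝ) (z t : ℂ) : Matrix (Fin 2) (Fin 2) ℂ :=
  !![1/2 + z * ((ε : ℂ)^2 - 1) / (2 * t), (ε : ℂ)^2 * (z + 1) / (2 * t);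
     z * (z + 1) / (2 * t), 1/2 - z * ((ε : ℂ)^2 - 1) / (2 * t)]

set_option maxHeartbeats 2000000 in
/-- Spectral decomposition of `Φ_ε(z)`: the `F`-matrices are complementary idempotents and
`Φ_ε(z) = r_{ε,2}(z;s)·F_{ε,1}(z;t) + r_{ε,1}(z;s)·F_{ε,2}(z;t)` with `s = t/ε`. -/
theorem stmt3 (ε : ℝ) (hε : ε ∈ Set.Ioo (0 : ℝ) 1) (z : ℂ) (hz0 : z ≠ 0) (hz1 : z ≠ 1)
    (t : ℂ) (ht0 : t ≠ 0) (ht : t^2 = z * (z + (ε : ℂ)^2) * (1 + (ε : ℂ)^2 * z))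
    (s : ℂ) (hs : s = t / (ε : ℂ)) :
    F1 ε z t + F2 ε z t = 1 ∧
    F1 ε z t * F1 ε z t = F1 ε z t ∧
    F2 ε z t * F2 ε z t = F2 ε z t ∧
    F1 ε z t * F2 ε z t = 0 ∧
    F2 ε z t * F1 ε z t = 0 ∧
    Phi ε z = r2 ε z s • F1 ε z t + r1 ε z s • F2 ε z t := by
  obtain ⟨hε0, hε1⟩ := hε
  have hεne : (ε : ℂ) ≠ 0 := by exact_mod_cast ne_of_gt hε0
  have hz1' : z - 1 ≠ 0 := sub_ne_zero.mpr hz1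
  have hzi : (1 : ℂ) - z⁻¹ = (z - 1) / z := by field_simp
  subst hs
  refine ⟨?_, ?_, ?_, ?_, ?_, ?_⟩
  · ext i j
    fin_cases i <;> fin_cases j <;>
      simp [F1, F2, Matrix.one_apply] <;> ring
  · ext i j
    fin_cases i <;> fin_cases j <;>
      simp [F1, Matrix.mul_apply, Fin.sum_univ_two] <;> field_simp <;>
      (first
      | ring1
      | linear_combination 2 * t * ht
      | linear_combination 4 * t * ht
      | linear_combination (-2) * t * ht
      | linear_combination (-4) * t * ht
      | linear_combination ht
      | linear_combination (-1 : ℂ) * ht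
      | linear_combination 2 * t ^ 2 * ht
      | linear_combination 4 * t ^ 2 * ht)
  · ext i j
    fin_cases i <;> fin_cases j <;>
      simp [F2, Matrix.mul_apply, Fin.sum_univ_two] <;> field_simp <;>
      (first
      | ring1
      | linear_combination 2 * t * ht
      | linear_combination 4 * t * ht
      | linear_combination (-2) * t * ht
      | linear_combination (-4) * t * ht
      | linear_combination ht
      | linear_combination (-1 : ℂ) * ht
      | linear_combination 2 * t ^ 2 * ht
      | linear_combination 4 * t ^ 2 * ht)
  · ext i j
    fin_cases i <;> fin_cases j <;>
      simp [F1, F2, Matrix.mul_apply, Fin.sum_univ_two] <;> field_simp <;>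
      (first
      | ring1
      | linear_combination 2 * t * ht
      | linear_combination 4 * t * ht
      | linear_combination (-2) * t * ht
      | linear_combination (-4) * t * ht
      | linear_combination ht
      | linear_combination (-1 : ℂ) * ht
      | linear_combination 2 * t ^ 2 * ht
      | linear_combination 4 * t ^ 2 * ht)
  · ext i j
    fin_cases i <;> fin_cases j <;>
      simp [F1, F2, Matrix.mul_apply, Fin.sum_univ_two] <;> field_simp <;>
      (first
      | ring1
      | linear_combination 2 * t * ht
      | linear_combination 4 * t * ht
      | linear_combination (-2) * t * ht
      | linear_combination (-4) * t * ht
      | linear_combination ht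
      | linear_combination (-1 : ℂ) * ht
      | linear_combination 2 * t ^ 2 * ht
      | linear_combination 4 * t ^ 2 * ht)
  · have h12 : phi1 ε z * phi2 ε z =
        (z / (z - 1)) • !![1 + z⁻¹, 2 * (ε : ℂ) ^ 2 * z⁻¹; 2 * ((ε : ℂ) ^ 2)⁻¹, 1 + z⁻¹] := by
      ext i j
      fin_cases i <;> fin_cases j <;>
        simp [phi1, phi2, Matrix.mul_apply, Fin.sum_univ_two, hzi, inv_div] <;>
        field_simp <;> ring
    have h34 : phi3 z * phi4 z =
        (z / (z - 1)) • !![1 + z⁻¹, 2 * z⁻¹; 2, 1 + z⁻¹] := by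
      ext i j
      fin_cases i <;> fin_cases j <;>
        simp [phi3, phi4, Matrix.mul_apply, Fin.sum_univ_two, hzi, inv_div] <;>
        field_simp <;> ring
    have hM : !![1 + z⁻¹, 2 * (ε : ℂ) ^ 2 * z⁻¹; 2 * ((ε : ℂ) ^ 2)⁻¹, 1 + z⁻¹] *
        !![1 + z⁻¹, 2 * z⁻¹; 2, 1 + z⁻¹] =
        !![(1 + z⁻¹) ^ 2 + 4 * (ε : ℂ) ^ 2 * z⁻¹, 2 * z⁻¹ * (1 + z⁻¹) * (1 + (ε : ℂ) ^ 2);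
           2 * (1 + z⁻¹) * (1 + ((ε : ℂ) ^ 2)⁻¹), (1 + z⁻¹) ^ 2 + 4 * z⁻¹ * ((ε : ℂ) ^ 2)⁻¹] := by
      ext i j
      fin_cases i <;> fin_cases j <;>
        simp [Matrix.mul_apply, Fin.sum_univ_two] <;> ring
    have hPhi : Phi ε z = ((z / (z - 1)) ^ 2) •
        !![(1 + z⁻¹) ^ 2 + 4 * (ε : ℂ) ^ 2 * z⁻¹, 2 * z⁻¹ * (1 + z⁻¹) * (1 + (ε : ℂ) ^ 2);
           2 * (1 + z⁻¹) * (1 + ((ε : ℂ) ^ 2)⁻¹), (1 + z⁻¹) ^ 2 + 4 * z⁻¹ * ((ε : ℂ) ^ 2)⁻¹] := by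
      rw [Phi, mul_assoc (phi1 ε z * phi2 ε z), h12, h34, smul_mul_assoc, mul_smul_comm,
        smul_smul, hM, ← sq]
    rw [hPhi]
    have hcomb : r2 ε z (t / (ε : ℂ)) • F1 ε z t + r1 ε z (t / (ε : ℂ)) • F2 ε z t =
        ((r1 ε z (t / (ε : ℂ)) + r2 ε z (t / (ε : ℂ))) / 2) • (1 : Matrix (Fin 2) (Fin 2) ℂ) +
        ((r1 ε z (t / (ε : ℂ)) - r2 ε z (t / (ε : ℂ))) / (2 * t)) •
          !![z * ((ε : ℂ) ^ 2 - 1), (ε : ℂ) ^ 2 * (z + 1);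
             z * (z + 1), -(z * ((ε : ℂ) ^ 2 - 1))] := by
      ext i j
      fin_cases i <;> fin_cases j <;>
        simp [F1, F2, Matrix.one_apply] <;> ring
    have hc1 : (r1 ε z (t / (ε : ℂ)) + r2 ε z (t / (ε : ℂ))) / 2 =
        ((z + 1) ^ 2 + 2 * z * ((ε : ℂ) ^ 2 + ((ε : ℂ) ^ 2)⁻¹)) / (z - 1) ^ 2 := by
      rw [r1, r2]; ring
    have h2t : (2 : ℂ) * t ≠ 0 := mul_ne_zero two_ne_zero ht0
    have hc2' : r1 ε z (t / (ε : ℂ)) - r2 ε z (t / (ε : ℂ)) =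
        (2 * t) * (2 * (1 + ((ε : ℂ) ^ 2)⁻¹) / (z - 1) ^ 2) := by
      rw [r1, r2]
      field_simp
      ring
    have hc2 : (r1 ε z (t / (ε : ℂ)) - r2 ε z (t / (ε : ℂ))) / (2 * t) =
        2 * (1 + ((ε : ℂ) ^ 2)⁻¹) / (z - 1) ^ 2 := by
      rw [hc2', mul_comm, mul_div_assoc, div_self h2t, mul_one]
    have key : (z ^ 2) • !![(1 + z⁻¹) ^ 2 + 4 * (ε : ℂ) ^ 2 * z⁻¹,
          2 * z⁻¹ * (1 + z⁻¹) * (1 + (ε : ℂ) ^ 2);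
          2 * (1 + z⁻¹) * (1 + ((ε : ℂ) ^ 2)⁻¹), (1 + z⁻¹) ^ 2 + 4 * z⁻¹ * ((ε : ℂ) ^ 2)⁻¹] =
        ((z + 1) ^ 2 + 2 * z * ((ε : ℂ) ^ 2 + ((ε : ℂ) ^ 2)⁻¹)) • (1 : Matrix (Fin 2) (Fin 2) ℂ) +
        (2 * (1 + ((ε : ℂ) ^ 2)⁻¹)) •
          !![z * ((ε : ℂ) ^ 2 - 1), (ε : ℂ) ^ 2 * (z + 1);
             z * (z + 1), -(z * ((ε : ℂ) ^ 2 - 1))] := by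
      ext i j
      fin_cases i <;> fin_cases j <;>
        simp [Matrix.one_apply] <;> field_simp <;> ring
    rw [hcomb, hc1, hc2, div_pow]
    simp only [div_eq_mul_inv]
    rw [mul_comm (z ^ 2) (((z - 1) ^ 2)⁻¹),
      mul_comm ((z + 1) ^ 2 + 2 * z * ((ε : ℂ) ^ 2 + ((ε : ℂ) ^ 2)⁻¹)) (((z - 1) ^ 2)⁻¹),
      mul_comm (2 * (1 + ((ε : ℂ) ^ 2)⁻¹)) (((z - 1) ^ 2)⁻¹),
      mul_smul, mul_smul, mul_smul, ← smul_add, key]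
end

section
/- Let ε ∈ (0,1) and let z ∈ ℂ with |z| = 1 and z ≠ 1. Then |trace Φ_ε(z)| > 2, and consequently every r ∈ ℂ satisfying det(Φ_ε(z) − r·I) = 0 has |r| ≠ 1 (no eigenvalue of Φ_ε(z) lies on the unit circle). -/
open Matrix Complex

lemma Phi_trace (ε : ℝ) (hε : ε ≠ 0) (z : ℂ) (hz0 : z ≠ 0) (hz1 : z ≠ 1) :
    (Phi ε z).trace = (2*(z+1)^2 + 4*z*((ε:ℂ)^2 + ((ε:ℂ)^2)⁻¹)) / (z-1)^2 := by
  have he : (ε:ℂ) ≠ 0 := by exact_mod_cast hε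
  have he2 : (ε:ℂ)^2 ≠ 0 := pow_ne_zero 2 he
  have hz1' : z - 1 ≠ 0 := sub_ne_zero.mpr hz1
  have hu : (ε:ℂ)^2 * ((ε:ℂ)^2)⁻¹ = 1 := mul_inv_cancel₀ he2
  have hw : z * z⁻¹ = 1 := mul_inv_cancel₀ hz0
  have e1 : Phi ε z = ((1 - z⁻¹)⁻¹ * (1 - z⁻¹)⁻¹) •
      (phi1 ε z * (phi1 ε z * (phi3 z * phi3 z))) := by
    show phi1 ε z * ((1 - z⁻¹)⁻¹ • phi1 ε z) * phi3 z * ((1 - z⁻¹)⁻¹ • phi3 z) = _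
    simp only [Matrix.mul_smul, Matrix.smul_mul, smul_smul, mul_assoc]
  rw [e1, Matrix.trace_smul]
  have e2 : (phi1 ε z * (phi1 ε z * (phi3 z * phi3 z))).trace
      = 2*(1+z⁻¹)^2 + 4*z⁻¹*((ε:ℂ)^2 + ((ε:ℂ)^2)⁻¹) := by
    simp only [phi1, phi3, Matrix.mul_fin_two, Matrix.trace_fin_two_of]
    linear_combination (2*z⁻¹*(1+z⁻¹)) * hu
  rw [e2, smul_eq_mul]
  have hc : (1 : ℂ) - z⁻¹ = (z-1)/z := by field_simp
  rw [hc, inv_div, ← sq, div_pow, div_mul_eq_mul_div,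
    div_eq_div_iff (pow_ne_zero 2 hz1') (pow_ne_zero 2 hz1')]
  linear_combination ((z-1)^2*(2*(2*z+z*z⁻¹+1) + 4*z*((ε:ℂ)^2+((ε:ℂ)^2)⁻¹))) * hw

lemma Phi_det (ε : ℝ) (hε : ε ≠ 0) (z : ℂ) (hz0 : z ≠ 0) (hz1 : z ≠ 1) :
    (Phi ε z).det = 1 := by
  have he : (ε:ℂ) ≠ 0 := by exact_mod_cast hε
  have he2 : (ε:ℂ)^2 ≠ 0 := pow_ne_zero 2 he
  have hz1' : z - 1 ≠ 0 := sub_ne_zero.mpr hz1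
  have h1 : (1 : ℂ) - z⁻¹ ≠ 0 := by
    rw [sub_ne_zero]
    intro h
    apply hz1
    rw [← inv_inv z, ← h, inv_one]
  have hd1 : (1:ℂ) * 1 - (ε:ℂ)^2 * z⁻¹ * ((ε:ℂ)^2)⁻¹ = 1 - z⁻¹ := by
    field_simp
  have hd3 : (1:ℂ) * 1 - z⁻¹ * 1 = 1 - z⁻¹ := by ring
  simp only [Phi, Matrix.det_mul, phi1, phi2, phi3, phi4, Matrix.det_smul,
    Matrix.det_fin_two_of, Fintype.card_fin, hd1, hd3, smul_eq_mul]
  have hcc : (1 - z⁻¹) * (1 - z⁻¹)⁻¹ = 1 := mul_inv_cancel₀ h1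
  linear_combination (((1 - z⁻¹) * (1 - z⁻¹)⁻¹)^3 + ((1 - z⁻¹) * (1 - z⁻¹)⁻¹)^2
    + (1 - z⁻¹) * (1 - z⁻¹)⁻¹ + 1) * hcc

/-- For `ε ∈ (0,1)` and `|z| = 1`, `z ≠ 1`: `|trace Φ_ε(z)| > 2`, and hence no eigenvalue of
`Φ_ε(z)` lies on the unit circle. -/
theorem stmt16 (ε : ℝ) (hε : ε ∈ Set.Ioo (0 : ℝ) 1) (z : ℂ)
    (hz : ‖z‖ = 1) (hz1 : z ≠ 1) :
    2 < ‖(Phi ε z).trace‖ ∧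
    ∀ r : ℂ, (Phi ε z - r • (1 : Matrix (Fin 2) (Fin 2) ℂ)).det = 0 →
      ‖r‖ ≠ 1 := by
  obtain ⟨hε0, hε1⟩ := hε
  have hεne : ε ≠ 0 := ne_of_gt hε0
  have hz0 : z ≠ 0 := by
    intro h; rw [h] at hz; simp at hz
  -- real quantities
  set x : ℝ := z.re with hxdef
  set b : ℝ := ε^2 + (ε^2)⁻¹ with hbdef
  have ha0 : (0:ℝ) < ε^2 := by positivity
  have ha1 : ε^2 < 1 := by nlinarith
  have hb2 : 2 < b := by
    rw [hbdef, ← sub_pos]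
    have : (2:ℝ) = 2 * ε^2 / ε^2 := by field_simp
    have h : ε^2 + (ε^2)⁻¹ - 2 = (ε^2 - 1)^2 / ε^2 := by field_simp; ring
    rw [h]
    exact div_pos (by nlinarith) ha0
  have hx_le : |x| ≤ 1 := by
    have := Complex.abs_re_le_norm z
    rwa [hz] at this
  have hxm1 : -1 ≤ x := by cases abs_le.mp hx_le; assumption
  have hx1 : x < 1 := by
    rcases lt_or_eq_of_le (abs_le.mp hx_le).2 with h | h
    · exact h
    · exfalso
      apply hz1
      have hns : Complex.normSq z = 1 := by
        rw [← Complex.sq_norm, hz]; norm_num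
      have him : z.im = 0 := by
        have := Complex.normSq_apply z
        nlinarith [sq_nonneg z.im, this]
      apply Complex.ext
      · simpa using h
      · simpa using him
  -- conj z = z⁻¹ and the key algebraic relation
  have hns : Complex.normSq z = 1 := by
    rw [← Complex.sq_norm, hz]; norm_num
  have hconj : (starRingEnd ℂ) z = z⁻¹ := by
    rw [Complex.inv_def, hns]; simp
  have hx2 : 2*(x:ℂ)*z = z^2 + 1 := by
    have h1 : z + (starRingEnd ℂ) z = 2*(x:ℂ) := by
      rw [Complex.add_conj]; push_cast; ring
    rw [hconj] at h1
    have hw : z * z⁻¹ = 1 := mul_inv_cancel₀ hz0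
    linear_combination (-z) * h1 + hw
  -- the trace is real
  have hxc1 : (x:ℂ) - 1 ≠ 0 := by
    rw [sub_ne_zero]
    exact_mod_cast ne_of_lt hx1
  have hz1' : z - 1 ≠ 0 := sub_ne_zero.mpr hz1
  have hB : ((b:ℝ):ℂ) = (ε:ℂ)^2 + ((ε:ℂ)^2)⁻¹ := by
    rw [hbdef]; push_cast; ring
  have htr : (Phi ε z).trace = (((2*(x+1+b))/(x-1) : ℝ) : ℂ) := by
    rw [Phi_trace ε hεne z hz0 hz1]
    push_cast
    rw [div_eq_div_iff (pow_ne_zero 2 hz1') (by exact_mod_cast hxc1)]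
    linear_combination (2*((2:ℂ) + ((ε:ℂ)^2 + ((ε:ℂ)^2)⁻¹))) * hx2 + (-2*(z-1)^2) * hB
  -- |trace| > 2
  have habs : ‖(Phi ε z).trace‖ = (2*(x+1+b))/(1-x) := by
    rw [htr, Complex.norm_real, Real.norm_eq_abs, abs_div, abs_of_pos (by linarith), abs_of_neg (by linarith : x - 1 < 0)]
    ring_nf
  have hmain : 2 < ‖(Phi ε z).trace‖ := by
    rw [habs, lt_div_iff₀ (by linarith : (0:ℝ) < 1 - x)]
    nlinarith
  refine ⟨hmain, ?_⟩
  -- eigenvalues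
  intro r hr hr1
  have hdet : (Phi ε z).det = 1 := Phi_det ε hεne z hz0 hz1
  have hchar : r^2 - (Phi ε z).trace * r + 1 = 0 := by
    have : (Phi ε z - r • (1 : Matrix (Fin 2) (Fin 2) ℂ)).det
        = r^2 - (Phi ε z).trace * r + (Phi ε z).det := by
      rw [Matrix.det_fin_two, Matrix.det_fin_two, Matrix.trace_fin_two]
      simp only [Matrix.sub_apply, Matrix.smul_apply, Matrix.one_apply_eq,
        Matrix.one_apply_ne (by decide : (0:Fin 2) ≠ 1),
        Matrix.one_apply_ne (by decide : (1:Fin 2) ≠ 0), smul_eq_mul]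
      ring
    rw [this, hdet] at hr
    exact hr
  have hr0 : r ≠ 0 := by
    intro h
    rw [h] at hchar
    simp at hchar
  have hteq : (Phi ε z).trace = r + r⁻¹ := by
    have hw : r * r⁻¹ = 1 := mul_inv_cancel₀ hr0
    linear_combination (-r⁻¹) * hchar + (r - (Phi ε z).trace) * hw
  have : ‖(Phi ε z).trace‖ ≤ 2 := by
    rw [hteq]
    calc ‖r + r⁻¹‖ ≤ ‖r‖ + ‖r⁻¹‖ := norm_add_le _ _
    _ = 1 + 1 := by rw [norm_inv, hr1]; norm_num
    _ = 2 := by norm_num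
  linarith
end

section
/- Let a ∈ (0,1] and ε ∈ (0,1). Then every complex root w of the quadratic 4a²ε²·w² + ((a²+1)²(ε⁴+1) − 2ε²(a⁴+1) + 4a²ε²)·w + 4a²ε² = 0 is real and negative, i.e., Im w = 0 and Re w < 0. -/
/-- Every complex root `w` of the quadratic
`4a²ε²·w² + ((a²+1)²(ε⁴+1) − 2ε²(a⁴+1) + 4a²ε²)·w + 4a²ε² = 0` is real and negative,
for `a ∈ (0,1]` and `ε ∈ (0,1)`. -/
theorem stmt17 (a ε : ℝ) (ha : a ∈ Set.Ioc (0 : ℝ) 1) (hε : ε ∈ Set.Ioo (0 : ℝ) 1) (w : ℂ)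
    (hw : 4 * (a : ℂ)^2 * (ε : ℂ)^2 * w^2
        + (((a : ℂ)^2 + 1)^2 * ((ε : ℂ)^4 + 1) - 2 * (ε : ℂ)^2 * ((a : ℂ)^4 + 1)
            + 4 * (a : ℂ)^2 * (ε : ℂ)^2) * w
        + 4 * (a : ℂ)^2 * (ε : ℂ)^2 = 0) :
    w.im = 0 ∧ w.re < 0 := by
  obtain ⟨ha0, ha1⟩ := ha
  obtain ⟨hε0, hε1⟩ := hε
  rw [← Complex.re_add_im w] at hw
  have hre := congrArg Complex.re hw
  have him := congrArg Complex.im hw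
  simp only [Complex.add_re, Complex.add_im, Complex.mul_re, Complex.mul_im,
    Complex.I_re, Complex.I_im, Complex.ofReal_re, Complex.ofReal_im,
    Complex.zero_re, Complex.zero_im, pow_succ, pow_zero, one_mul,
    Complex.sub_re, Complex.sub_im, Complex.one_re, Complex.one_im,
    Complex.re_ofNat, Complex.im_ofNat] at hre him
  ring_nf at hre him
  have hApos : 0 < a^2 * ε^2 := by positivity
  by_cases hy : w.im = 0
  · refine ⟨hy, ?_⟩
    rw [hy] at hre
    by_contra hxc
    push_neg at hxc
    nlinarith [mul_nonneg hxc (sq_nonneg ((a^2+1)*(ε^2-1))),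
      mul_nonneg (mul_nonneg hApos.le hxc) hxc, sq_nonneg w.re,
      mul_nonneg hApos.le hxc]
  · exfalso
    have hfac : w.im * (8*a^2*ε^2*w.re
        + ((a^2+1)^2*(ε^4+1) - 2*ε^2*(a^4+1) + 4*a^2*ε^2)) = 0 := by
      linear_combination him
    have h2 : 8*a^2*ε^2*w.re
        + ((a^2+1)^2*(ε^4+1) - 2*ε^2*(a^4+1) + 4*a^2*ε^2) = 0 :=
      (mul_eq_zero.mp hfac).resolve_left hy
    have hy2 : 0 < w.im^2 := by positivity
    have hxle : w.re ≤ -1 := by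
      by_contra hc
      push_neg at hc
      nlinarith [sq_nonneg ((a^2+1)*(ε^2-1)),
        mul_pos hApos (by linarith : (0:ℝ) < w.re + 1)]
    have hcirc0 : 4*a^2*ε^2 * (w.re^2 + w.im^2 - 1) = 0 := by
      linear_combination w.re * h2 - hre
    have hcirc : w.re^2 + w.im^2 = 1 := by
      rcases mul_eq_zero.mp hcirc0 with h | h
      · nlinarith
      · linarith
    nlinarith [sq_nonneg (w.re + 1)]
end
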